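/- arXiv:1301.4152 — 9 statements merged into one kernel-verified Lean document; each statement's English description precedes it below -/
import Mathlib

section
/- If (C, Δ) is a coassociative coalgebra and α : C → C is a coalgebra endomorphism, then C_α = (C, Δ_α, α) with Δ_α = Δ ∘ α is a Hom-coassociative coalgebra; i.e., Δ_α satisfies comultiplicativity (Δ_α ∘ α = (α ⊗ α) ∘ Δ_α) and Hom-coassociativity ((α ⊗ Δ_α) ∘ Δ_α = (Δ_α ⊗ α) ∘ Δ_α). -/
open TensorProduct

/-!
Since `α` is a coalgebra map, `α ⊗ (Δ ∘ α) = (id ⊗ Δ) ∘ (α ⊗ α)` and `(α ⊗ α) ∘ Δ = Δ ∘ α`, so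
`(α ⊗ Δ_α) ∘ Δ_α = (id ⊗ Δ) ∘ Δ ∘ α²`; symmetrically `(Δ_α ⊗ α) ∘ Δ_α = (Δ ⊗ id) ∘ Δ ∘ α²`,
and coassociativity of `Δ` identifies the two.
-/

namespace LinearMap

variable {R C : Type*} [CommSemiring R] [AddCommMonoid C] [Module R C]
  {Δ : C →ₗ[R] C ⊗[R] C} {α : C →ₗ[R] C}

theorem map_twist_right_comp_twist_eq_lTensor (hα : Δ ∘ₗ α = map α α ∘ₗ Δ) :
    map α (Δ ∘ₗ α) ∘ₗ (Δ ∘ₗ α) = (lTensor C Δ ∘ₗ Δ) ∘ₗ (α ∘ₗ α) := by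
  rw [← lTensor_comp_map, comp_assoc, ← comp_assoc α Δ, ← hα]
  rfl

theorem map_twist_left_comp_twist_eq_rTensor (hα : Δ ∘ₗ α = map α α ∘ₗ Δ) :
    map (Δ ∘ₗ α) α ∘ₗ (Δ ∘ₗ α) = (rTensor C Δ ∘ₗ Δ) ∘ₗ (α ∘ₗ α) := by
  rw [← rTensor_comp_map, comp_assoc, ← comp_assoc α Δ, ← hα]
  rfl

end LinearMap

/-- Deforming a coassociative coalgebra along a coalgebra endomorphism
yields a Hom-coassociative coalgebra. -/
theorem stmt_0 {F : Type*} [Field F] {C : Type*} [AddCommGroup C] [Module F C]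
    (Δ : C →ₗ[F] C ⊗[F] C) (α : C →ₗ[F] C)
    -- Δ is coassociative
    (hcoassoc : LinearMap.lTensor C Δ ∘ₗ Δ =
      (TensorProduct.assoc F C C C).toLinearMap ∘ₗ LinearMap.rTensor C Δ ∘ₗ Δ)
    -- α is a coalgebra endomorphism
    (hα : Δ ∘ₗ α = TensorProduct.map α α ∘ₗ Δ) :
    -- comultiplicativity of Δ_α = Δ ∘ α
    (Δ ∘ₗ α) ∘ₗ α = TensorProduct.map α α ∘ₗ (Δ ∘ₗ α) ∧
    -- Hom-coassociativity of Δ_α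
    TensorProduct.map α (Δ ∘ₗ α) ∘ₗ (Δ ∘ₗ α) =
      (TensorProduct.assoc F C C C).toLinearMap ∘ₗ
        TensorProduct.map (Δ ∘ₗ α) α ∘ₗ (Δ ∘ₗ α) := by
  refine ⟨by rw [hα, LinearMap.comp_assoc, hα], ?_⟩
  rw [LinearMap.map_twist_right_comp_twist_eq_lTensor hα,
    LinearMap.map_twist_left_comp_twist_eq_rTensor hα, hcoassoc]
  rfl
end

section
/- Let (C, Δ_C, α_C) be a Hom-coassociative coalgebra and (M, α_M) a C-comodule with structure map δ : M → C ⊗ M. Then the map δ̃ = (α_C² ⊗ id_M) ∘ δ is the structure map of another C-comodule structure on (M, α_M); that is, δ̃ ∘ α_M = (α_C ⊗ α_M) ∘ δ̃ and (α_C ⊗ δ̃) ∘ δ̃ = (Δ_C ⊗ α_M) ∘ δ̃. -/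
/-!
Replacing δ by (β ⊗ id) ∘ δ, for any linear map β that commutes with α_C and is comultiplicative
(Δ_C ∘ β = (β ⊗ β) ∘ Δ_C), preserves both comodule axioms: β ⊗ id slides past α_C ⊗ α_M,
and in the coassociativity square β ⊗ β ⊗ id is pushed through the associator onto Δ_C.
Multiplicativity of α_C (Δ_C ∘ α_C = (α_C ⊗ α_C) ∘ Δ_C) makes β = α_C² such a map.
-/

open TensorProduct LinearMap

section Twist

variable {R C M : Type*} [CommSemiring R] [AddCommMonoid C] [Module R C]
  [AddCommMonoid M] [Module R M]

theorem comp_comp_eq_map_comp_of_comp_eq_map_comp {Δ : C →ₗ[R] C ⊗[R] C} {f g : C →ₗ[R] C}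
    (hf : Δ ∘ₗ f = map f f ∘ₗ Δ) (hg : Δ ∘ₗ g = map g g ∘ₗ Δ) :
    Δ ∘ₗ (f ∘ₗ g) = map (f ∘ₗ g) (f ∘ₗ g) ∘ₗ Δ := by
  rw [← comp_assoc, hf, comp_assoc, hg, ← comp_assoc, map_comp]

variable {αC β : C →ₗ[R] C} {αM : M →ₗ[R] M} {δ : M →ₗ[R] C ⊗[R] M}

theorem map_id_comp_comp_eq_map_comp (hβ : β ∘ₗ αC = αC ∘ₗ β)
    (hδm : δ ∘ₗ αM = map αC αM ∘ₗ δ) :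
    (map β id ∘ₗ δ) ∘ₗ αM = map αC αM ∘ₗ (map β id ∘ₗ δ) := by
  rw [comp_assoc, hδm, ← comp_assoc, ← comp_assoc, ← map_comp, ← map_comp, hβ,
    id_comp, comp_id]

theorem map_map_id_comp_comp_eq_assoc_comp (Δ : C →ₗ[R] C ⊗[R] C)
    (hβ : β ∘ₗ αC = αC ∘ₗ β) (hΔβ : Δ ∘ₗ β = map β β ∘ₗ Δ)
    (hδ : map αC δ ∘ₗ δ = (TensorProduct.assoc R C C M).toLinearMap ∘ₗ map Δ αM ∘ₗ δ) :
    map αC (map β id ∘ₗ δ) ∘ₗ (map β id ∘ₗ δ) =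
      (TensorProduct.assoc R C C M).toLinearMap ∘ₗ map Δ αM ∘ₗ (map β id ∘ₗ δ) := by
  have hslide : map αC (map β id ∘ₗ δ) ∘ₗ (map β id ∘ₗ δ) =
      map β (map β id) ∘ₗ (map αC δ ∘ₗ δ) := by
    rw [← comp_assoc, ← map_comp, ← comp_assoc, ← map_comp, comp_id, hβ]
  rw [hslide, hδ, ← comp_assoc, map_map_comp_assoc_eq, comp_assoc]
  congr 1
  rw [← comp_assoc, ← comp_assoc, ← map_comp, ← map_comp, ← hΔβ, id_comp, comp_id]

end Twist

theorem stmt_1_general {F : Type*} [Field F] {C M : Type*}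
    [AddCommGroup C] [Module F C] [AddCommGroup M] [Module F M]
    (ΔC : C →ₗ[F] C ⊗[F] C) (αC : C →ₗ[F] C) (αM : M →ₗ[F] M)
    (δ : M →ₗ[F] C ⊗[F] M)
    -- (C, Δ_C, α_C) is a Hom-coassociative coalgebra
    (hcm : ΔC ∘ₗ αC = TensorProduct.map αC αC ∘ₗ ΔC)
    -- δ is a C-comodule structure on (M, α_M)
    (hδm : δ ∘ₗ αM = TensorProduct.map αC αM ∘ₗ δ)
    (hδ : TensorProduct.map αC δ ∘ₗ δ =
      (TensorProduct.assoc F C C M).toLinearMap ∘ₗ TensorProduct.map ΔC αM ∘ₗ δ) :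
    -- δ̃ = (α_C² ⊗ id_M) ∘ δ is again a C-comodule structure on (M, α_M)
    (TensorProduct.map (αC ∘ₗ αC) LinearMap.id ∘ₗ δ) ∘ₗ αM =
      TensorProduct.map αC αM ∘ₗ (TensorProduct.map (αC ∘ₗ αC) LinearMap.id ∘ₗ δ) ∧
    TensorProduct.map αC (TensorProduct.map (αC ∘ₗ αC) LinearMap.id ∘ₗ δ) ∘ₗ
        (TensorProduct.map (αC ∘ₗ αC) LinearMap.id ∘ₗ δ) =
      (TensorProduct.assoc F C C M).toLinearMap ∘ₗ TensorProduct.map ΔC αM ∘ₗ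
        (TensorProduct.map (αC ∘ₗ αC) LinearMap.id ∘ₗ δ) := by
  have hcomm : (αC ∘ₗ αC) ∘ₗ αC = αC ∘ₗ (αC ∘ₗ αC) := comp_assoc _ _ _
  exact ⟨map_id_comp_comp_eq_map_comp hcomm hδm,
    map_map_id_comp_comp_eq_assoc_comp ΔC hcomm
      (comp_comp_eq_map_comp_of_comp_eq_map_comp hcm hcm) hδ⟩

/-- Twisting a comodule structure over a Hom-coassociative coalgebra by α_C²
yields another comodule structure. -/
theorem stmt_1 {F : Type*} [Field F] {C M : Type*}
    [AddCommGroup C] [Module F C] [AddCommGroup M] [Module F M]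
    (ΔC : C →ₗ[F] C ⊗[F] C) (αC : C →ₗ[F] C) (αM : M →ₗ[F] M)
    (δ : M →ₗ[F] C ⊗[F] M)
    -- (C, Δ_C, α_C) is a Hom-coassociative coalgebra
    (hcm : ΔC ∘ₗ αC = TensorProduct.map αC αC ∘ₗ ΔC)
    (hca : TensorProduct.map αC ΔC ∘ₗ ΔC =
      (TensorProduct.assoc F C C C).toLinearMap ∘ₗ TensorProduct.map ΔC αC ∘ₗ ΔC)
    -- δ is a C-comodule structure on (M, α_M)
    (hδm : δ ∘ₗ αM = TensorProduct.map αC αM ∘ₗ δ)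
    (hδ : TensorProduct.map αC δ ∘ₗ δ =
      (TensorProduct.assoc F C C M).toLinearMap ∘ₗ TensorProduct.map ΔC αM ∘ₗ δ) :
    -- δ̃ = (α_C² ⊗ id_M) ∘ δ is again a C-comodule structure on (M, α_M)
    (TensorProduct.map (αC ∘ₗ αC) LinearMap.id ∘ₗ δ) ∘ₗ αM =
      TensorProduct.map αC αM ∘ₗ (TensorProduct.map (αC ∘ₗ αC) LinearMap.id ∘ₗ δ) ∧
    TensorProduct.map αC (TensorProduct.map (αC ∘ₗ αC) LinearMap.id ∘ₗ δ) ∘ₗ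
        (TensorProduct.map (αC ∘ₗ αC) LinearMap.id ∘ₗ δ) =
      (TensorProduct.assoc F C C M).toLinearMap ∘ₗ TensorProduct.map ΔC αM ∘ₗ
        (TensorProduct.map (αC ∘ₗ αC) LinearMap.id ∘ₗ δ) :=
  stmt_1_general ΔC αC αM δ hcm hδm hδ
end

section
/- Let (H, μ_H, Δ_H, α_H) be a Hom-bialgebra and let (M, α_M), (N, α_N) be H-comodules with structure maps δ_M : M → H ⊗ M and δ_N : N → H ⊗ N. Then δ_{MN} = (μ_H ⊗ id_{M⊗N}) ∘ (id_H ⊗ τ_{H,M} ⊗ id_N) ∘ (δ_M ⊗ δ_N) : M ⊗ N → H ⊗ M ⊗ N is the structure map of an H-comodule structure on (M ⊗ N, α_M ⊗ α_N); i.e., δ_{MN} ∘ (α_M ⊗ α_N) = (α_H ⊗ α_M ⊗ α_N) ∘ δ_{MN} and (α_H ⊗ δ_{MN}) ∘ δ_{MN} = (Δ_H ⊗ α_M ⊗ α_N) ∘ δ_{MN}. -/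
/-!
The map `tensorMul μ : (h ⊗ m) ⊗ (k ⊗ n) ↦ hk ⊗ (m ⊗ n)` intertwines `φ ⊗ (f ⊗ g)` with
`(φ ⊗ f) ⊗ (φ ⊗ g)` for every multiplicative `φ`. Applied to `φ = α_H` and to `φ = Δ_H`
(multiplicative for the componentwise product on `H ⊗ H`, which is the bialgebra axiom), it
reduces both comodule axioms for `M ⊗ N` to those of `M` and `N`, up to a reassociation of
tensor factors.
-/

open TensorProduct LinearMap

namespace HomBialgebra

variable {R H K M N M' N' : Type*} [CommSemiring R] [AddCommMonoid H] [Module R H]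
  [AddCommMonoid K] [Module R K] [AddCommMonoid M] [Module R M] [AddCommMonoid N] [Module R N]
  [AddCommMonoid M'] [Module R M'] [AddCommMonoid N'] [Module R N']

def tensorMul (μ : H ⊗[R] H →ₗ[R] H) : (H ⊗[R] M) ⊗[R] (H ⊗[R] N) →ₗ[R] H ⊗[R] (M ⊗[R] N) :=
  μ.rTensor _ ∘ₗ (tensorTensorTensorComm R H M H N).toLinearMap

def tensorCoaction (μ : H ⊗[R] H →ₗ[R] H) (δM : M →ₗ[R] H ⊗[R] M) (δN : N →ₗ[R] H ⊗[R] N) :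
    M ⊗[R] N →ₗ[R] H ⊗[R] (M ⊗[R] N) :=
  tensorMul μ ∘ₗ map δM δN

theorem map_map_comp_tensorMul {μ : H ⊗[R] H →ₗ[R] H} {ν : K ⊗[R] K →ₗ[R] K} {φ : H →ₗ[R] K}
    (hφ : φ ∘ₗ μ = ν ∘ₗ map φ φ) (f : M →ₗ[R] M') (g : N →ₗ[R] N') :
    map φ (map f g) ∘ₗ tensorMul μ = tensorMul ν ∘ₗ map (map φ f) (map φ g) := by
  rw [tensorMul, tensorMul, comp_assoc, tensorTensorTensorComm_comp_map, ← comp_assoc,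
    map_comp_rTensor, hφ, ← rTensor_comp_map, comp_assoc]

theorem lTensor_tensorMul_comp_tensorMul_comp_map_assoc (μ : H ⊗[R] H →ₗ[R] H) :
    (tensorMul μ).lTensor H ∘ₗ tensorMul μ ∘ₗ
        map (TensorProduct.assoc R H H M).toLinearMap (TensorProduct.assoc R H H N).toLinearMap =
      (TensorProduct.assoc R H H (M ⊗[R] N)).toLinearMap ∘ₗ
        tensorMul (map μ μ ∘ₗ (tensorTensorTensorComm R H H H H).toLinearMap) := by
  ext
  simp [tensorMul]

theorem tensorCoaction_comp_map {μ : H ⊗[R] H →ₗ[R] H} {α : H →ₗ[R] H} {αM : M →ₗ[R] M}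
    {αN : N →ₗ[R] N} {δM : M →ₗ[R] H ⊗[R] M} {δN : N →ₗ[R] H ⊗[R] N}
    (hμ : α ∘ₗ μ = μ ∘ₗ map α α) (hM : δM ∘ₗ αM = map α αM ∘ₗ δM)
    (hN : δN ∘ₗ αN = map α αN ∘ₗ δN) :
    tensorCoaction μ δM δN ∘ₗ map αM αN = map α (map αM αN) ∘ₗ tensorCoaction μ δM δN := by
  rw [tensorCoaction, comp_assoc, ← map_comp, hM, hN, map_comp, ← comp_assoc,
    ← map_map_comp_tensorMul hμ, comp_assoc]

theorem map_tensorCoaction_comp_tensorCoaction {μ : H ⊗[R] H →ₗ[R] H} {Δ : H →ₗ[R] H ⊗[R] H}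
    {α : H →ₗ[R] H} {αM : M →ₗ[R] M} {αN : N →ₗ[R] N}
    {δM : M →ₗ[R] H ⊗[R] M} {δN : N →ₗ[R] H ⊗[R] N}
    (hμ : α ∘ₗ μ = μ ∘ₗ map α α)
    (hΔ : Δ ∘ₗ μ = map μ μ ∘ₗ (tensorTensorTensorComm R H H H H).toLinearMap ∘ₗ map Δ Δ)
    (hM : map α δM ∘ₗ δM = (TensorProduct.assoc R H H M).toLinearMap ∘ₗ map Δ αM ∘ₗ δM)
    (hN : map α δN ∘ₗ δN = (TensorProduct.assoc R H H N).toLinearMap ∘ₗ map Δ αN ∘ₗ δN) :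
    map α (tensorCoaction μ δM δN) ∘ₗ tensorCoaction μ δM δN =
      (TensorProduct.assoc R H H (M ⊗[R] N)).toLinearMap ∘ₗ map Δ (map αM αN) ∘ₗ
        tensorCoaction μ δM δN := by
  calc map α (tensorCoaction μ δM δN) ∘ₗ tensorCoaction μ δM δN
      = (tensorMul μ).lTensor H ∘ₗ (map α (map δM δN) ∘ₗ tensorMul μ) ∘ₗ map δM δN := by
        rw [tensorCoaction, ← lTensor_comp_map]; rfl
    _ = (tensorMul μ).lTensor H ∘ₗ tensorMul μ ∘ₗ map (map α δM ∘ₗ δM) (map α δN ∘ₗ δN) := by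
        rw [map_map_comp_tensorMul hμ, map_comp]; rfl
    _ = ((tensorMul μ).lTensor H ∘ₗ tensorMul μ ∘ₗ map (TensorProduct.assoc R H H M).toLinearMap
            (TensorProduct.assoc R H H N).toLinearMap) ∘ₗ
          map (map Δ αM) (map Δ αN) ∘ₗ map δM δN := by
        rw [hM, hN, map_comp, map_comp]; rfl
    _ = (TensorProduct.assoc R H H (M ⊗[R] N)).toLinearMap ∘ₗ
          (tensorMul (map μ μ ∘ₗ (tensorTensorTensorComm R H H H H).toLinearMap) ∘ₗ
          map (map Δ αM) (map Δ αN)) ∘ₗ map δM δN := by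
        rw [lTensor_tensorMul_comp_tensorMul_comp_map_assoc]; rfl
    _ = (TensorProduct.assoc R H H (M ⊗[R] N)).toLinearMap ∘ₗ
          (map Δ (map αM αN) ∘ₗ tensorMul μ) ∘ₗ map δM δN := by
        rw [map_map_comp_tensorMul (hΔ.trans (comp_assoc _ _ _).symm)]

end HomBialgebra

theorem stmt_2_general {F : Type*} [Field F] {H M N : Type*}
    [AddCommGroup H] [Module F H] [AddCommGroup M] [Module F M]
    [AddCommGroup N] [Module F N]
    (μH : H ⊗[F] H →ₗ[F] H) (ΔH : H →ₗ[F] H ⊗[F] H) (αH : H →ₗ[F] H)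
    (αM : M →ₗ[F] M) (αN : N →ₗ[F] N)
    (δM : M →ₗ[F] H ⊗[F] M) (δN : N →ₗ[F] H ⊗[F] N)
    -- (H, μ_H, α_H) is a Hom-associative algebra
    (hmult : αH ∘ₗ μH = μH ∘ₗ TensorProduct.map αH αH)
    -- Δ_H is multiplicative
    (hbi : ΔH ∘ₗ μH = TensorProduct.map μH μH ∘ₗ
      (TensorProduct.tensorTensorTensorComm F H H H H).toLinearMap ∘ₗ
      TensorProduct.map ΔH ΔH)
    -- (M, α_M, δ_M) and (N, α_N, δ_N) are H-comodules
    (hδMm : δM ∘ₗ αM = TensorProduct.map αH αM ∘ₗ δM)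
    (hδM : TensorProduct.map αH δM ∘ₗ δM =
      (TensorProduct.assoc F H H M).toLinearMap ∘ₗ TensorProduct.map ΔH αM ∘ₗ δM)
    (hδNm : δN ∘ₗ αN = TensorProduct.map αH αN ∘ₗ δN)
    (hδN : TensorProduct.map αH δN ∘ₗ δN =
      (TensorProduct.assoc F H H N).toLinearMap ∘ₗ TensorProduct.map ΔH αN ∘ₗ δN) :
    -- δ_{MN} is an H-comodule structure on (M ⊗ N, α_M ⊗ α_N)
    (TensorProduct.map μH LinearMap.id ∘ₗ
        (TensorProduct.tensorTensorTensorComm F H M H N).toLinearMap ∘ₗ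
        TensorProduct.map δM δN) ∘ₗ TensorProduct.map αM αN =
      TensorProduct.map αH (TensorProduct.map αM αN) ∘ₗ
        (TensorProduct.map μH LinearMap.id ∘ₗ
          (TensorProduct.tensorTensorTensorComm F H M H N).toLinearMap ∘ₗ
          TensorProduct.map δM δN) ∧
    TensorProduct.map αH
        (TensorProduct.map μH LinearMap.id ∘ₗ
          (TensorProduct.tensorTensorTensorComm F H M H N).toLinearMap ∘ₗ
          TensorProduct.map δM δN) ∘ₗ
        (TensorProduct.map μH LinearMap.id ∘ₗ
          (TensorProduct.tensorTensorTensorComm F H M H N).toLinearMap ∘ₗ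
          TensorProduct.map δM δN) =
      (TensorProduct.assoc F H H (M ⊗[F] N)).toLinearMap ∘ₗ
        TensorProduct.map ΔH (TensorProduct.map αM αN) ∘ₗ
        (TensorProduct.map μH LinearMap.id ∘ₗ
          (TensorProduct.tensorTensorTensorComm F H M H N).toLinearMap ∘ₗ
          TensorProduct.map δM δN) := by
  exact ⟨HomBialgebra.tensorCoaction_comp_map hmult hδMm hδNm,
    HomBialgebra.map_tensorCoaction_comp_tensorCoaction hmult hbi hδM hδN⟩

/-- The tensor product of two comodules over a Hom-bialgebra is a comodule. -/
theorem stmt_2 {F : Type*} [Field F] {H M N : Type*}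
    [AddCommGroup H] [Module F H] [AddCommGroup M] [Module F M]
    [AddCommGroup N] [Module F N]
    (μH : H ⊗[F] H →ₗ[F] H) (ΔH : H →ₗ[F] H ⊗[F] H) (αH : H →ₗ[F] H)
    (αM : M →ₗ[F] M) (αN : N →ₗ[F] N)
    (δM : M →ₗ[F] H ⊗[F] M) (δN : N →ₗ[F] H ⊗[F] N)
    -- (H, μ_H, α_H) is a Hom-associative algebra
    (hmult : αH ∘ₗ μH = μH ∘ₗ TensorProduct.map αH αH)
    (hassoc : μH ∘ₗ TensorProduct.map αH μH ∘ₗ (TensorProduct.assoc F H H H).toLinearMap =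
      μH ∘ₗ TensorProduct.map μH αH)
    -- (H, Δ_H, α_H) is a Hom-coassociative coalgebra
    (hcm : ΔH ∘ₗ αH = TensorProduct.map αH αH ∘ₗ ΔH)
    (hca : TensorProduct.map αH ΔH ∘ₗ ΔH =
      (TensorProduct.assoc F H H H).toLinearMap ∘ₗ TensorProduct.map ΔH αH ∘ₗ ΔH)
    -- Δ_H is multiplicative
    (hbi : ΔH ∘ₗ μH = TensorProduct.map μH μH ∘ₗ
      (TensorProduct.tensorTensorTensorComm F H H H H).toLinearMap ∘ₗ
      TensorProduct.map ΔH ΔH)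
    -- (M, α_M, δ_M) and (N, α_N, δ_N) are H-comodules
    (hδMm : δM ∘ₗ αM = TensorProduct.map αH αM ∘ₗ δM)
    (hδM : TensorProduct.map αH δM ∘ₗ δM =
      (TensorProduct.assoc F H H M).toLinearMap ∘ₗ TensorProduct.map ΔH αM ∘ₗ δM)
    (hδNm : δN ∘ₗ αN = TensorProduct.map αH αN ∘ₗ δN)
    (hδN : TensorProduct.map αH δN ∘ₗ δN =
      (TensorProduct.assoc F H H N).toLinearMap ∘ₗ TensorProduct.map ΔH αN ∘ₗ δN) :
    -- δ_{MN} is an H-comodule structure on (M ⊗ N, α_M ⊗ α_N)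
    (TensorProduct.map μH LinearMap.id ∘ₗ
        (TensorProduct.tensorTensorTensorComm F H M H N).toLinearMap ∘ₗ
        TensorProduct.map δM δN) ∘ₗ TensorProduct.map αM αN =
      TensorProduct.map αH (TensorProduct.map αM αN) ∘ₗ
        (TensorProduct.map μH LinearMap.id ∘ₗ
          (TensorProduct.tensorTensorTensorComm F H M H N).toLinearMap ∘ₗ
          TensorProduct.map δM δN) ∧
    TensorProduct.map αH
        (TensorProduct.map μH LinearMap.id ∘ₗ
          (TensorProduct.tensorTensorTensorComm F H M H N).toLinearMap ∘ₗ
          TensorProduct.map δM δN) ∘ₗ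
        (TensorProduct.map μH LinearMap.id ∘ₗ
          (TensorProduct.tensorTensorTensorComm F H M H N).toLinearMap ∘ₗ
          TensorProduct.map δM δN) =
      (TensorProduct.assoc F H H (M ⊗[F] N)).toLinearMap ∘ₗ
        TensorProduct.map ΔH (TensorProduct.map αM αN) ∘ₗ
        (TensorProduct.map μH LinearMap.id ∘ₗ
          (TensorProduct.tensorTensorTensorComm F H M H N).toLinearMap ∘ₗ
          TensorProduct.map δM δN) :=
  stmt_2_general μH ΔH αH αM αN δM δN hmult hbi hδMm hδM hδNm hδN
end

section
/- Let (H, μ_H, Δ_H) be a bialgebra, (C, Δ_C) an H-comodule coalgebra via δ : C → H ⊗ C, α_H : H → H a bialgebra endomorphism, and α_C : C → C a coalgebra endomorphism with δ ∘ α_C = (α_H ⊗ α_C) ∘ δ. Define the Hom-bialgebra H_α = (H, μ_{α,H} = α_H ∘ μ_H, Δ_{α,H} = Δ_H ∘ α_H, α_H) and the Hom-coassociative coalgebra C_α = (C, Δ_{α,C} = Δ_C ∘ α_C, α_C). Then δ_α = (α_H ⊗ α_C) ∘ δ (equivalently δ ∘ α_C) gives C_α the structure of an H_α-comodule Hom-coalgebra: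 δ_α is an H_α-comodule structure map on C_α and satisfies the comodule Hom-coalgebra axiom (α_H² ⊗ Δ_{α,C}) ∘ δ_α = (δ_α)_{CC} ∘ Δ_{α,C}. -/
open TensorProduct
section Aux
variable {R : Type*} [CommRing R]

lemma map_comp_tail {M N P Q M' N' X : Type*}
    [AddCommGroup M] [Module R M] [AddCommGroup N] [Module R N]
    [AddCommGroup P] [Module R P] [AddCommGroup Q] [Module R Q]
    [AddCommGroup M'] [Module R M'] [AddCommGroup N'] [Module R N']
    [AddCommGroup X] [Module R X]
    (f₂ : P →ₗ[R] M') (f₁ : M →ₗ[R] P) (g₂ : Q →ₗ[R] N') (g₁ : N →ₗ[R] Q)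
    (t : X →ₗ[R] M ⊗[R] N) :
    TensorProduct.map f₂ g₂ ∘ₗ (TensorProduct.map f₁ g₁ ∘ₗ t) =
      TensorProduct.map (f₂ ∘ₗ f₁) (g₂ ∘ₗ g₁) ∘ₗ t := by
  rw [TensorProduct.map_comp, LinearMap.comp_assoc]

lemma ttt_nat_tail {M N P Q M' N' P' Q' X : Type*}
    [AddCommGroup M] [Module R M] [AddCommGroup N] [Module R N]
    [AddCommGroup P] [Module R P] [AddCommGroup Q] [Module R Q]
    [AddCommGroup M'] [Module R M'] [AddCommGroup N'] [Module R N']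
    [AddCommGroup P'] [Module R P'] [AddCommGroup Q'] [Module R Q']
    [AddCommGroup X] [Module R X]
    (f : M →ₗ[R] M') (g : N →ₗ[R] N') (h : P →ₗ[R] P') (k : Q →ₗ[R] Q')
    (t : X →ₗ[R] (M ⊗[R] N) ⊗[R] (P ⊗[R] Q)) :
    (tensorTensorTensorComm R M' N' P' Q').toLinearMap ∘ₗ
        (TensorProduct.map (TensorProduct.map f g) (TensorProduct.map h k) ∘ₗ t) =
      TensorProduct.map (TensorProduct.map f h) (TensorProduct.map g k) ∘ₗ
        ((tensorTensorTensorComm R M N P Q).toLinearMap ∘ₗ t) := by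
  rw [← LinearMap.comp_assoc, ← LinearMap.comp_assoc]
  congr 1
  ext m n p q
  rfl

lemma assoc_nat_tail {M N P M' N' P' X : Type*}
    [AddCommGroup M] [Module R M] [AddCommGroup N] [Module R N]
    [AddCommGroup P] [Module R P]
    [AddCommGroup M'] [Module R M'] [AddCommGroup N'] [Module R N']
    [AddCommGroup P'] [Module R P']
    [AddCommGroup X] [Module R X]
    (f : M →ₗ[R] M') (g : N →ₗ[R] N') (h : P →ₗ[R] P')
    (t : X →ₗ[R] (M ⊗[R] N) ⊗[R] P) :
    TensorProduct.map f (TensorProduct.map g h) ∘ₗ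
        ((TensorProduct.assoc R M N P).toLinearMap ∘ₗ t) =
      (TensorProduct.assoc R M' N' P').toLinearMap ∘ₗ
        (TensorProduct.map (TensorProduct.map f g) h ∘ₗ t) := by
  rw [← LinearMap.comp_assoc, ← LinearMap.comp_assoc]
  congr 1
  ext m n p
  rfl

end Aux

/-- Deforming a comodule coalgebra over a bialgebra along compatible endomorphisms
yields a comodule Hom-coalgebra over the deformed Hom-bialgebra. -/
theorem stmt_4 {F : Type*} [Field F] {H C : Type*}
    [AddCommGroup H] [Module F H] [AddCommGroup C] [Module F C]
    (μH : H ⊗[F] H →ₗ[F] H) (ΔH : H →ₗ[F] H ⊗[F] H)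
    (ΔC : C →ₗ[F] C ⊗[F] C) (δ : C →ₗ[F] H ⊗[F] C)
    (αH : H →ₗ[F] H) (αC : C →ₗ[F] C)
    -- H is a bialgebra: associative, coassociative, Δ_H an algebra map
    (hassoc : μH ∘ₗ LinearMap.lTensor H μH ∘ₗ (TensorProduct.assoc F H H H).toLinearMap =
      μH ∘ₗ LinearMap.rTensor H μH)
    (hcoassoc : LinearMap.lTensor H ΔH ∘ₗ ΔH =
      (TensorProduct.assoc F H H H).toLinearMap ∘ₗ LinearMap.rTensor H ΔH ∘ₗ ΔH)
    (hbi : ΔH ∘ₗ μH = TensorProduct.map μH μH ∘ₗ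
      (TensorProduct.tensorTensorTensorComm F H H H H).toLinearMap ∘ₗ
      TensorProduct.map ΔH ΔH)
    -- C is a coassociative coalgebra
    (hCcoassoc : LinearMap.lTensor C ΔC ∘ₗ ΔC =
      (TensorProduct.assoc F C C C).toLinearMap ∘ₗ LinearMap.rTensor C ΔC ∘ₗ ΔC)
    -- δ is a (classical) H-comodule structure on C
    (hδ : LinearMap.lTensor H δ ∘ₗ δ =
      (TensorProduct.assoc F H H C).toLinearMap ∘ₗ LinearMap.rTensor C ΔH ∘ₗ δ)
    -- the comodule coalgebra axiom
    (hcc : LinearMap.lTensor H ΔC ∘ₗ δ =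
      (TensorProduct.map μH LinearMap.id ∘ₗ
        (TensorProduct.tensorTensorTensorComm F H C H C).toLinearMap ∘ₗ
        TensorProduct.map δ δ) ∘ₗ ΔC)
    -- α_H is a bialgebra endomorphism
    (hαHμ : αH ∘ₗ μH = μH ∘ₗ TensorProduct.map αH αH)
    (hαHΔ : ΔH ∘ₗ αH = TensorProduct.map αH αH ∘ₗ ΔH)
    -- α_C is a coalgebra endomorphism
    (hαC : ΔC ∘ₗ αC = TensorProduct.map αC αC ∘ₗ ΔC)
    -- compatibility δ ∘ α_C = (α_H ⊗ α_C) ∘ δ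
    (hcomp : δ ∘ₗ αC = TensorProduct.map αH αC ∘ₗ δ) :
    -- δ_α = (α_H ⊗ α_C) ∘ δ is an H_α-comodule structure on C_α ...
    (TensorProduct.map αH αC ∘ₗ δ) ∘ₗ αC =
      TensorProduct.map αH αC ∘ₗ (TensorProduct.map αH αC ∘ₗ δ) ∧
    TensorProduct.map αH (TensorProduct.map αH αC ∘ₗ δ) ∘ₗ (TensorProduct.map αH αC ∘ₗ δ) =
      (TensorProduct.assoc F H H C).toLinearMap ∘ₗ
        TensorProduct.map (ΔH ∘ₗ αH) αC ∘ₗ (TensorProduct.map αH αC ∘ₗ δ) ∧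
    -- ... satisfying the comodule Hom-coalgebra axiom
    TensorProduct.map (αH ∘ₗ αH) (ΔC ∘ₗ αC) ∘ₗ (TensorProduct.map αH αC ∘ₗ δ) =
      (TensorProduct.map (αH ∘ₗ μH) LinearMap.id ∘ₗ
        (TensorProduct.tensorTensorTensorComm F H C H C).toLinearMap ∘ₗ
        TensorProduct.map (TensorProduct.map αH αC ∘ₗ δ) (TensorProduct.map αH αC ∘ₗ δ)) ∘ₗ
        (ΔC ∘ₗ αC) := by
  -- part 1
  have hAA : (TensorProduct.map αH αC ∘ₗ δ) ∘ₗ αC =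
      TensorProduct.map αH αC ∘ₗ (TensorProduct.map αH αC ∘ₗ δ) := by
    rw [LinearMap.comp_assoc, hcomp]
  refine ⟨hAA, ?_, ?_⟩
  · -- part 2
    have hδ' : TensorProduct.map LinearMap.id δ ∘ₗ δ =
        (TensorProduct.assoc F H H C).toLinearMap ∘ₗ
          (TensorProduct.map ΔH LinearMap.id ∘ₗ δ) := hδ
    have hB2 : TensorProduct.map (αH ∘ₗ αH) (αH ∘ₗ αH) ∘ₗ ΔH = (ΔH ∘ₗ αH) ∘ₗ αH := by
      rw [hαHΔ, LinearMap.comp_assoc αH ΔH (TensorProduct.map αH αH), hαHΔ,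
        ← LinearMap.comp_assoc ΔH (TensorProduct.map αH αH) (TensorProduct.map αH αH),
        ← TensorProduct.map_comp αH αH αH αH]
    calc TensorProduct.map αH (TensorProduct.map αH αC ∘ₗ δ) ∘ₗ
          (TensorProduct.map αH αC ∘ₗ δ)
        = TensorProduct.map (αH ∘ₗ αH)
            ((TensorProduct.map αH αC ∘ₗ δ) ∘ₗ αC) ∘ₗ δ :=
          map_comp_tail αH αH (TensorProduct.map αH αC ∘ₗ δ) αC δ
      _ = TensorProduct.map (αH ∘ₗ αH)
            (TensorProduct.map αH αC ∘ₗ (TensorProduct.map αH αC ∘ₗ δ)) ∘ₗ δ := by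
          rw [hAA]
      _ = TensorProduct.map (αH ∘ₗ αH)
            (TensorProduct.map (αH ∘ₗ αH) (αC ∘ₗ αC)) ∘ₗ
            (TensorProduct.map LinearMap.id δ ∘ₗ δ) := by
          rw [map_comp_tail (αH ∘ₗ αH) LinearMap.id
              (TensorProduct.map (αH ∘ₗ αH) (αC ∘ₗ αC)) δ δ,
            LinearMap.comp_id (αH ∘ₗ αH), TensorProduct.map_comp αH αC αH αC,
            LinearMap.comp_assoc δ (TensorProduct.map αH αC) (TensorProduct.map αH αC)]
      _ = TensorProduct.map (αH ∘ₗ αH)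
            (TensorProduct.map (αH ∘ₗ αH) (αC ∘ₗ αC)) ∘ₗ
            ((TensorProduct.assoc F H H C).toLinearMap ∘ₗ
              (TensorProduct.map ΔH LinearMap.id ∘ₗ δ)) := by rw [hδ']
      _ = (TensorProduct.assoc F H H C).toLinearMap ∘ₗ
            (TensorProduct.map (TensorProduct.map (αH ∘ₗ αH) (αH ∘ₗ αH)) (αC ∘ₗ αC) ∘ₗ
              (TensorProduct.map ΔH LinearMap.id ∘ₗ δ)) :=
          assoc_nat_tail _ _ _ _
      _ = (TensorProduct.assoc F H H C).toLinearMap ∘ₗ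
            (TensorProduct.map (TensorProduct.map (αH ∘ₗ αH) (αH ∘ₗ αH) ∘ₗ ΔH)
              (αC ∘ₗ αC) ∘ₗ δ) := by
          rw [map_comp_tail (TensorProduct.map (αH ∘ₗ αH) (αH ∘ₗ αH)) ΔH
              (αC ∘ₗ αC) LinearMap.id δ, LinearMap.comp_id (αC ∘ₗ αC)]
      _ = (TensorProduct.assoc F H H C).toLinearMap ∘ₗ
            TensorProduct.map (ΔH ∘ₗ αH) αC ∘ₗ (TensorProduct.map αH αC ∘ₗ δ) := by
          rw [map_comp_tail (ΔH ∘ₗ αH) αH αC αC δ, hB2]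
  · -- part 3
    have hcc' : TensorProduct.map LinearMap.id ΔC ∘ₗ δ =
        TensorProduct.map μH LinearMap.id ∘ₗ
          ((TensorProduct.tensorTensorTensorComm F H C H C).toLinearMap ∘ₗ
            (TensorProduct.map δ δ ∘ₗ ΔC)) := by
      rw [← LinearMap.comp_assoc, ← LinearMap.comp_assoc]
      exact hcc
    have hμ3 : ((αH ∘ₗ αH) ∘ₗ αH) ∘ₗ μH =
        ((αH ∘ₗ μH) ∘ₗ TensorProduct.map αH αH) ∘ₗ TensorProduct.map αH αH := by
      rw [hαHμ, LinearMap.comp_assoc μH αH (αH ∘ₗ αH), hαHμ,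
        ← LinearMap.comp_assoc (TensorProduct.map αH αH) μH (αH ∘ₗ αH),
        LinearMap.comp_assoc μH αH αH, hαHμ,
        ← LinearMap.comp_assoc (TensorProduct.map αH αH) μH αH, hαHμ]
    calc TensorProduct.map (αH ∘ₗ αH) (ΔC ∘ₗ αC) ∘ₗ (TensorProduct.map αH αC ∘ₗ δ)
        = TensorProduct.map ((αH ∘ₗ αH) ∘ₗ αH) ((ΔC ∘ₗ αC) ∘ₗ αC) ∘ₗ δ :=
          map_comp_tail (αH ∘ₗ αH) αH (ΔC ∘ₗ αC) αC δ
      _ = TensorProduct.map ((αH ∘ₗ αH) ∘ₗ αH)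
            (TensorProduct.map αC αC ∘ₗ (TensorProduct.map αC αC ∘ₗ ΔC)) ∘ₗ δ := by
          rw [hαC, LinearMap.comp_assoc αC ΔC (TensorProduct.map αC αC), hαC]
      _ = TensorProduct.map ((αH ∘ₗ αH) ∘ₗ αH)
            (TensorProduct.map αC αC ∘ₗ TensorProduct.map αC αC) ∘ₗ
            (TensorProduct.map LinearMap.id ΔC ∘ₗ δ) := by
          rw [map_comp_tail ((αH ∘ₗ αH) ∘ₗ αH) LinearMap.id
              (TensorProduct.map αC αC ∘ₗ TensorProduct.map αC αC) ΔC δ,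
            LinearMap.comp_id ((αH ∘ₗ αH) ∘ₗ αH),
            LinearMap.comp_assoc ΔC (TensorProduct.map αC αC) (TensorProduct.map αC αC)]
      _ = TensorProduct.map ((αH ∘ₗ αH) ∘ₗ αH)
            (TensorProduct.map αC αC ∘ₗ TensorProduct.map αC αC) ∘ₗ
            (TensorProduct.map μH LinearMap.id ∘ₗ
              ((TensorProduct.tensorTensorTensorComm F H C H C).toLinearMap ∘ₗ
                (TensorProduct.map δ δ ∘ₗ ΔC))) := by rw [hcc']
      _ = TensorProduct.map (((αH ∘ₗ αH) ∘ₗ αH) ∘ₗ μH)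
            (TensorProduct.map αC αC ∘ₗ TensorProduct.map αC αC) ∘ₗ
            ((TensorProduct.tensorTensorTensorComm F H C H C).toLinearMap ∘ₗ
              (TensorProduct.map δ δ ∘ₗ ΔC)) := by
          rw [map_comp_tail ((αH ∘ₗ αH) ∘ₗ αH) μH
              (TensorProduct.map αC αC ∘ₗ TensorProduct.map αC αC) LinearMap.id
              ((TensorProduct.tensorTensorTensorComm F H C H C).toLinearMap ∘ₗ
                (TensorProduct.map δ δ ∘ₗ ΔC)),
            LinearMap.comp_id (TensorProduct.map αC αC ∘ₗ TensorProduct.map αC αC)]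
      _ = (TensorProduct.map (αH ∘ₗ μH) LinearMap.id ∘ₗ
            (TensorProduct.tensorTensorTensorComm F H C H C).toLinearMap ∘ₗ
            TensorProduct.map (TensorProduct.map αH αC ∘ₗ δ)
              (TensorProduct.map αH αC ∘ₗ δ)) ∘ₗ (ΔC ∘ₗ αC) := by
          rw [LinearMap.comp_assoc (ΔC ∘ₗ αC)
              ((TensorProduct.tensorTensorTensorComm F H C H C).toLinearMap ∘ₗ
                TensorProduct.map (TensorProduct.map αH αC ∘ₗ δ)
                  (TensorProduct.map αH αC ∘ₗ δ))
              (TensorProduct.map (αH ∘ₗ μH) LinearMap.id),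
            LinearMap.comp_assoc (ΔC ∘ₗ αC)
              (TensorProduct.map (TensorProduct.map αH αC ∘ₗ δ)
                (TensorProduct.map αH αC ∘ₗ δ))
              (TensorProduct.tensorTensorTensorComm F H C H C).toLinearMap,
            hαC,
            map_comp_tail (TensorProduct.map αH αC ∘ₗ δ) αC
              (TensorProduct.map αH αC ∘ₗ δ) αC ΔC,
            hAA,
            TensorProduct.map_comp (TensorProduct.map αH αC)
              (TensorProduct.map αH αC) (TensorProduct.map αH αC ∘ₗ δ)
              (TensorProduct.map αH αC ∘ₗ δ),
            TensorProduct.map_comp (TensorProduct.map αH αC)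
              (TensorProduct.map αH αC) δ δ,
            LinearMap.comp_assoc ΔC
              (TensorProduct.map (TensorProduct.map αH αC) (TensorProduct.map αH αC) ∘ₗ
                TensorProduct.map δ δ)
              (TensorProduct.map (TensorProduct.map αH αC) (TensorProduct.map αH αC)),
            LinearMap.comp_assoc ΔC (TensorProduct.map δ δ)
              (TensorProduct.map (TensorProduct.map αH αC) (TensorProduct.map αH αC)),
            ttt_nat_tail αH αC αH αC
              (TensorProduct.map (TensorProduct.map αH αC) (TensorProduct.map αH αC) ∘ₗ
                (TensorProduct.map δ δ ∘ₗ ΔC)),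
            ttt_nat_tail αH αC αH αC (TensorProduct.map δ δ ∘ₗ ΔC),
            map_comp_tail (αH ∘ₗ μH) (TensorProduct.map αH αH) LinearMap.id
              (TensorProduct.map αC αC)
              (TensorProduct.map (TensorProduct.map αH αH) (TensorProduct.map αC αC) ∘ₗ
                ((TensorProduct.tensorTensorTensorComm F H C H C).toLinearMap ∘ₗ
                  (TensorProduct.map δ δ ∘ₗ ΔC))),
            map_comp_tail ((αH ∘ₗ μH) ∘ₗ TensorProduct.map αH αH)
              (TensorProduct.map αH αH) (LinearMap.id ∘ₗ TensorProduct.map αC αC)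
              (TensorProduct.map αC αC)
              ((TensorProduct.tensorTensorTensorComm F H C H C).toLinearMap ∘ₗ
                (TensorProduct.map δ δ ∘ₗ ΔC)),
            LinearMap.id_comp (TensorProduct.map αC αC), hμ3]
end

section
/- Let (H, μ_H, Δ_H) be a bialgebra, (C, Δ_C) an H-comodule coalgebra via δ : C → H ⊗ C, and α_C : C → C a coalgebra endomorphism that is also H-colinear (i.e., δ ∘ α_C = (id_H ⊗ α_C) ∘ δ). Then δ_α = (id_H ⊗ α_C) ∘ δ gives the Hom-coassociative coalgebra C_α = (C, Δ_C ∘ α_C, α_C) the structure of an H-comodule Hom-coalgebra, where H is viewed as the Hom-bialgebra (H, μ_H, Δ_H, id_H). -/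
/-!
Colinearity `δ ∘ α = (id ⊗ α) ∘ δ` lets every occurrence of `α` be pushed through the
coaction, so each axiom for `δ_α = (id ⊗ α) ∘ δ` becomes the corresponding axiom for `δ`
followed by a tensor power of `α`. What remains is naturality of the associator and of the
middle-four interchange of tensor factors.
-/

open TensorProduct LinearMap

section TwistedComodule

variable {R H C : Type*} [CommSemiring R] [AddCommMonoid H] [Module R H]
  [AddCommMonoid C] [Module R C]

def twistCoaction (δ : C →ₗ[R] H ⊗[R] C) (α : C →ₗ[R] C) : C →ₗ[R] H ⊗[R] C :=
  lTensor H α ∘ₗ δ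

/-- The coaction `c ⊗ d ↦ c₍₋₁₎d₍₋₁₎ ⊗ c₍₀₎ ⊗ d₍₀₎` of `H` on `C ⊗ C`. -/
def tensorCoaction (μ : H ⊗[R] H →ₗ[R] H) (δ : C →ₗ[R] H ⊗[R] C) :
    C ⊗[R] C →ₗ[R] H ⊗[R] (C ⊗[R] C) :=
  map μ LinearMap.id ∘ₗ (tensorTensorTensorComm R H C H C).toLinearMap ∘ₗ map δ δ

theorem assoc_comp_lTensor_tensor {M N P Q : Type*} [AddCommMonoid M] [Module R M]
    [AddCommMonoid N] [Module R N] [AddCommMonoid P] [Module R P]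
    [AddCommMonoid Q] [Module R Q] (f : P →ₗ[R] Q) :
    (TensorProduct.assoc R M N Q).toLinearMap ∘ₗ lTensor (M ⊗[R] N) f =
      lTensor M (lTensor N f) ∘ₗ (TensorProduct.assoc R M N P).toLinearMap :=
  TensorProduct.ext_threefold fun _ _ _ => rfl

variable (δ : C →ₗ[R] H ⊗[R] C) (α : C →ₗ[R] C)

theorem twistCoaction_comp (hα : δ ∘ₗ α = lTensor H α ∘ₗ δ) :
    twistCoaction δ α ∘ₗ α = lTensor H α ∘ₗ twistCoaction δ α := by
  rw [twistCoaction, comp_assoc, hα]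

theorem lTensor_twistCoaction_comp_twistCoaction (Δ : H →ₗ[R] H ⊗[R] H)
    (hδ : lTensor H δ ∘ₗ δ = (TensorProduct.assoc R H H C).toLinearMap ∘ₗ rTensor C Δ ∘ₗ δ)
    (hα : δ ∘ₗ α = lTensor H α ∘ₗ δ) :
    lTensor H (twistCoaction δ α) ∘ₗ twistCoaction δ α =
      (TensorProduct.assoc R H H C).toLinearMap ∘ₗ map Δ α ∘ₗ twistCoaction δ α := by
  calc lTensor H (twistCoaction δ α) ∘ₗ twistCoaction δ α
      = lTensor H (twistCoaction δ α ∘ₗ α) ∘ₗ δ := by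
        rw [twistCoaction, ← comp_assoc, ← lTensor_comp, ← twistCoaction]
    _ = lTensor H (lTensor H (α ∘ₗ α)) ∘ₗ lTensor H δ ∘ₗ δ := by
        rw [twistCoaction_comp δ α hα, twistCoaction]
        simp only [lTensor_comp, comp_assoc]
    _ = (TensorProduct.assoc R H H C).toLinearMap ∘ₗ
          lTensor (H ⊗[R] H) (α ∘ₗ α) ∘ₗ rTensor C Δ ∘ₗ δ := by
        rw [hδ, ← comp_assoc, ← assoc_comp_lTensor_tensor, comp_assoc]
    _ = (TensorProduct.assoc R H H C).toLinearMap ∘ₗ map Δ α ∘ₗ twistCoaction δ α := by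
        rw [twistCoaction, ← comp_assoc _ (rTensor C Δ), lTensor_comp_rTensor,
          ← comp_assoc _ (lTensor H α), map_comp_lTensor]

theorem tensorCoaction_twistCoaction (μ : H ⊗[R] H →ₗ[R] H) :
    tensorCoaction μ (twistCoaction δ α) = lTensor H (map α α) ∘ₗ tensorCoaction μ δ := by
  have hnat : map μ LinearMap.id ∘ₗ (tensorTensorTensorComm R H C H C).toLinearMap ∘ₗ
      map (lTensor H α) (lTensor H α) =
      lTensor H (map α α) ∘ₗ map μ LinearMap.id ∘ₗ
        (tensorTensorTensorComm R H C H C).toLinearMap := by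
    ext; simp
  rw [tensorCoaction, twistCoaction, map_comp, ← comp_assoc, ← comp_assoc,
    comp_assoc _ _ (map μ LinearMap.id), hnat]
  simp only [tensorCoaction, comp_assoc]

theorem lTensor_comp_comp_twistCoaction (μ : H ⊗[R] H →ₗ[R] H) (Δ : C →ₗ[R] C ⊗[R] C)
    (hcc : lTensor H Δ ∘ₗ δ = tensorCoaction μ δ ∘ₗ Δ)
    (hΔα : Δ ∘ₗ α = map α α ∘ₗ Δ) (hα : δ ∘ₗ α = lTensor H α ∘ₗ δ) :
    lTensor H (Δ ∘ₗ α) ∘ₗ twistCoaction δ α =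
      tensorCoaction μ (twistCoaction δ α) ∘ₗ (Δ ∘ₗ α) := by
  calc lTensor H (Δ ∘ₗ α) ∘ₗ twistCoaction δ α
      = lTensor H (Δ ∘ₗ α) ∘ₗ δ ∘ₗ α := by rw [twistCoaction, hα]
    _ = lTensor H (map α α) ∘ₗ (lTensor H Δ ∘ₗ δ) ∘ₗ α := by
        rw [hΔα, lTensor_comp]
        simp only [comp_assoc]
    _ = tensorCoaction μ (twistCoaction δ α) ∘ₗ (Δ ∘ₗ α) := by
        rw [hcc, tensorCoaction_twistCoaction]
        simp only [comp_assoc]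

end TwistedComodule

theorem stmt_5_general {F : Type*} [Field F] {H C : Type*}
    [AddCommGroup H] [Module F H] [AddCommGroup C] [Module F C]
    (μH : H ⊗[F] H →ₗ[F] H) (ΔH : H →ₗ[F] H ⊗[F] H)
    (ΔC : C →ₗ[F] C ⊗[F] C) (δ : C →ₗ[F] H ⊗[F] C)
    (αC : C →ₗ[F] C)
    -- δ is a (classical) H-comodule structure on C
    (hδ : LinearMap.lTensor H δ ∘ₗ δ =
      (TensorProduct.assoc F H H C).toLinearMap ∘ₗ LinearMap.rTensor C ΔH ∘ₗ δ)
    -- the comodule coalgebra axiom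
    (hcc : LinearMap.lTensor H ΔC ∘ₗ δ =
      (TensorProduct.map μH LinearMap.id ∘ₗ
        (TensorProduct.tensorTensorTensorComm F H C H C).toLinearMap ∘ₗ
        TensorProduct.map δ δ) ∘ₗ ΔC)
    -- α_C is a coalgebra endomorphism
    (hαC : ΔC ∘ₗ αC = TensorProduct.map αC αC ∘ₗ ΔC)
    -- α_C is H-colinear
    (hcomp : δ ∘ₗ αC = LinearMap.lTensor H αC ∘ₗ δ) :
    -- δ_α = (id_H ⊗ α_C) ∘ δ is an H-comodule structure on C_α ...
    (LinearMap.lTensor H αC ∘ₗ δ) ∘ₗ αC =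
      TensorProduct.map LinearMap.id αC ∘ₗ (LinearMap.lTensor H αC ∘ₗ δ) ∧
    TensorProduct.map LinearMap.id (LinearMap.lTensor H αC ∘ₗ δ) ∘ₗ
        (LinearMap.lTensor H αC ∘ₗ δ) =
      (TensorProduct.assoc F H H C).toLinearMap ∘ₗ
        TensorProduct.map ΔH αC ∘ₗ (LinearMap.lTensor H αC ∘ₗ δ) ∧
    -- ... satisfying the comodule Hom-coalgebra axiom (with α_H = id)
    TensorProduct.map LinearMap.id (ΔC ∘ₗ αC) ∘ₗ (LinearMap.lTensor H αC ∘ₗ δ) =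
      (TensorProduct.map μH LinearMap.id ∘ₗ
        (TensorProduct.tensorTensorTensorComm F H C H C).toLinearMap ∘ₗ
        TensorProduct.map (LinearMap.lTensor H αC ∘ₗ δ) (LinearMap.lTensor H αC ∘ₗ δ)) ∘ₗ
        (ΔC ∘ₗ αC) :=
  ⟨twistCoaction_comp δ αC hcomp,
    lTensor_twistCoaction_comp_twistCoaction δ αC ΔH hδ hcomp,
    lTensor_comp_comp_twistCoaction δ αC μH ΔC hcc hαC hcomp⟩

/-- Special case α_H = id: an H-colinear coalgebra endomorphism of a comodule coalgebra
deforms it into an H-comodule Hom-coalgebra. -/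
theorem stmt_5 {F : Type*} [Field F] {H C : Type*}
    [AddCommGroup H] [Module F H] [AddCommGroup C] [Module F C]
    (μH : H ⊗[F] H →ₗ[F] H) (ΔH : H →ₗ[F] H ⊗[F] H)
    (ΔC : C →ₗ[F] C ⊗[F] C) (δ : C →ₗ[F] H ⊗[F] C)
    (αC : C →ₗ[F] C)
    -- H is a bialgebra
    (hassoc : μH ∘ₗ LinearMap.lTensor H μH ∘ₗ (TensorProduct.assoc F H H H).toLinearMap =
      μH ∘ₗ LinearMap.rTensor H μH)
    (hcoassoc : LinearMap.lTensor H ΔH ∘ₗ ΔH =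
      (TensorProduct.assoc F H H H).toLinearMap ∘ₗ LinearMap.rTensor H ΔH ∘ₗ ΔH)
    (hbi : ΔH ∘ₗ μH = TensorProduct.map μH μH ∘ₗ
      (TensorProduct.tensorTensorTensorComm F H H H H).toLinearMap ∘ₗ
      TensorProduct.map ΔH ΔH)
    -- C is a coassociative coalgebra
    (hCcoassoc : LinearMap.lTensor C ΔC ∘ₗ ΔC =
      (TensorProduct.assoc F C C C).toLinearMap ∘ₗ LinearMap.rTensor C ΔC ∘ₗ ΔC)
    -- δ is a (classical) H-comodule structure on C
    (hδ : LinearMap.lTensor H δ ∘ₗ δ =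
      (TensorProduct.assoc F H H C).toLinearMap ∘ₗ LinearMap.rTensor C ΔH ∘ₗ δ)
    -- the comodule coalgebra axiom
    (hcc : LinearMap.lTensor H ΔC ∘ₗ δ =
      (TensorProduct.map μH LinearMap.id ∘ₗ
        (TensorProduct.tensorTensorTensorComm F H C H C).toLinearMap ∘ₗ
        TensorProduct.map δ δ) ∘ₗ ΔC)
    -- α_C is a coalgebra endomorphism
    (hαC : ΔC ∘ₗ αC = TensorProduct.map αC αC ∘ₗ ΔC)
    -- α_C is H-colinear
    (hcomp : δ ∘ₗ αC = LinearMap.lTensor H αC ∘ₗ δ) :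
    -- δ_α = (id_H ⊗ α_C) ∘ δ is an H-comodule structure on C_α ...
    (LinearMap.lTensor H αC ∘ₗ δ) ∘ₗ αC =
      TensorProduct.map LinearMap.id αC ∘ₗ (LinearMap.lTensor H αC ∘ₗ δ) ∧
    TensorProduct.map LinearMap.id (LinearMap.lTensor H αC ∘ₗ δ) ∘ₗ
        (LinearMap.lTensor H αC ∘ₗ δ) =
      (TensorProduct.assoc F H H C).toLinearMap ∘ₗ
        TensorProduct.map ΔH αC ∘ₗ (LinearMap.lTensor H αC ∘ₗ δ) ∧
    -- ... satisfying the comodule Hom-coalgebra axiom (with α_H = id)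
    TensorProduct.map LinearMap.id (ΔC ∘ₗ αC) ∘ₗ (LinearMap.lTensor H αC ∘ₗ δ) =
      (TensorProduct.map μH LinearMap.id ∘ₗ
        (TensorProduct.tensorTensorTensorComm F H C H C).toLinearMap ∘ₗ
        TensorProduct.map (LinearMap.lTensor H αC ∘ₗ δ) (LinearMap.lTensor H αC ∘ₗ δ)) ∘ₗ
        (ΔC ∘ₗ αC) :=
  stmt_5_general μH ΔH ΔC δ αC hδ hcc hαC hcomp
end

section
/- Let (H, μ_H, Δ_H) be a bialgebra and α_H : H → H a bialgebra endomorphism. Then H_α = (H, μ_α = α_H ∘ μ_H, Δ_α = Δ_H ∘ α_H, α_H) is a Hom-bialgebra: (H, μ_α, α_H) is a Hom-associative algebra, (H, Δ_α, α_H) is a Hom-coassociative coalgebra, and Δ_α(μ_α(a ⊗ b)) = Σ (μ_α(a₁' ⊗ b₁')) ⊗ (μ_α(a₂' ⊗ b₂')) where Δ_α(a) = Σ a₁' ⊗ a₂', i.e., Δ_α is multiplicative with respect to μ_α. -/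
/-!
Since `α` commutes with `μ` and `Δ`, every copy of `α` introduced by the twist can be pushed to
one end of each composite. The two sides of Hom-associativity become `α ∘ α` composed with the two
sides of associativity, those of Hom-coassociativity become the two sides of coassociativity
composed with `α ∘ α`, and those of the compatibility condition become `(α ⊗ α) ∘ Δ ∘ μ ∘ (α ⊗ α)`
with `Δ ∘ μ` either kept or expanded by the bialgebra axiom.
-/

open TensorProduct LinearMap

namespace HomBialgebra

variable {R M : Type*} [CommSemiring R] [AddCommMonoid M] [Module R M]

def IsHomAssociative (μ : M ⊗[R] M →ₗ[R] M) (α : M →ₗ[R] M) : Prop :=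
  α ∘ₗ μ = μ ∘ₗ map α α ∧
    μ ∘ₗ map α μ ∘ₗ (TensorProduct.assoc R M M M).toLinearMap = μ ∘ₗ map μ α

def IsHomCoassociative (Δ : M →ₗ[R] M ⊗[R] M) (α : M →ₗ[R] M) : Prop :=
  Δ ∘ₗ α = map α α ∘ₗ Δ ∧
    map α Δ ∘ₗ Δ = (TensorProduct.assoc R M M M).toLinearMap ∘ₗ map Δ α ∘ₗ Δ

def IsMultiplicative (μ : M ⊗[R] M →ₗ[R] M) (Δ : M →ₗ[R] M ⊗[R] M) : Prop :=
  Δ ∘ₗ μ = map μ μ ∘ₗ (tensorTensorTensorComm R M M M M).toLinearMap ∘ₗ map Δ Δ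

variable {μ : M ⊗[R] M →ₗ[R] M} {Δ : M →ₗ[R] M ⊗[R] M} {α : M →ₗ[R] M}

theorem isHomAssociative_comp
    (hassoc : μ ∘ₗ lTensor M μ ∘ₗ (TensorProduct.assoc R M M M).toLinearMap =
      μ ∘ₗ rTensor M μ)
    (hαμ : α ∘ₗ μ = μ ∘ₗ map α α) :
    IsHomAssociative (α ∘ₗ μ) α := by
  refine ⟨by rw [comp_assoc, hαμ], ?_⟩
  calc (α ∘ₗ μ) ∘ₗ map α (α ∘ₗ μ) ∘ₗ (TensorProduct.assoc R M M M).toLinearMap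
      = α ∘ₗ (μ ∘ₗ map α α) ∘ₗ lTensor M μ ∘ₗ
          (TensorProduct.assoc R M M M).toLinearMap := by
        rw [← map_comp_lTensor]; simp only [comp_assoc]
    _ = α ∘ₗ α ∘ₗ μ ∘ₗ rTensor M μ := by
        rw [← hαμ]; simp only [comp_assoc]; rw [hassoc]
    _ = α ∘ₗ (μ ∘ₗ map α α) ∘ₗ rTensor M μ := by
        rw [← hαμ]; simp only [comp_assoc]
    _ = (α ∘ₗ μ) ∘ₗ map (α ∘ₗ μ) α := by
        rw [← map_comp_rTensor]; simp only [comp_assoc]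

theorem isHomCoassociative_comp
    (hcoassoc : lTensor M Δ ∘ₗ Δ =
      (TensorProduct.assoc R M M M).toLinearMap ∘ₗ rTensor M Δ ∘ₗ Δ)
    (hαΔ : Δ ∘ₗ α = map α α ∘ₗ Δ) :
    IsHomCoassociative (Δ ∘ₗ α) α := by
  refine ⟨by rw [← comp_assoc, hαΔ, comp_assoc], ?_⟩
  calc map α (Δ ∘ₗ α) ∘ₗ Δ ∘ₗ α
      = lTensor M Δ ∘ₗ (map α α ∘ₗ Δ) ∘ₗ α := by
        rw [← lTensor_comp_map]; simp only [comp_assoc]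
    _ = (lTensor M Δ ∘ₗ Δ) ∘ₗ α ∘ₗ α := by
        rw [← hαΔ]; simp only [comp_assoc]
    _ = (TensorProduct.assoc R M M M).toLinearMap ∘ₗ rTensor M Δ ∘ₗ (map α α ∘ₗ Δ) ∘ₗ α := by
        rw [hcoassoc, ← hαΔ]; simp only [comp_assoc]
    _ = (TensorProduct.assoc R M M M).toLinearMap ∘ₗ map (Δ ∘ₗ α) α ∘ₗ Δ ∘ₗ α := by
        rw [← rTensor_comp_map]; simp only [comp_assoc]

theorem IsMultiplicative.comp (hbi : IsMultiplicative μ Δ) (hαμ : α ∘ₗ μ = μ ∘ₗ map α α)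
    (hαΔ : Δ ∘ₗ α = map α α ∘ₗ Δ) :
    IsMultiplicative (α ∘ₗ μ) (Δ ∘ₗ α) := by
  have hαΔμα : (Δ ∘ₗ α) ∘ₗ (α ∘ₗ μ) = map α α ∘ₗ (Δ ∘ₗ μ) ∘ₗ map α α := by
    rw [hαΔ, comp_assoc, hαμ, comp_assoc]
  rw [IsMultiplicative, hαΔμα, hbi, map_comp, map_comp]
  simp only [comp_assoc]

end HomBialgebra

/-- Deforming a bialgebra along a bialgebra endomorphism yields a Hom-bialgebra. -/
theorem stmt_7 {F : Type*} [Field F] {H : Type*} [AddCommGroup H] [Module F H]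
    (μH : H ⊗[F] H →ₗ[F] H) (ΔH : H →ₗ[F] H ⊗[F] H) (αH : H →ₗ[F] H)
    -- H is a bialgebra
    (hassoc : μH ∘ₗ LinearMap.lTensor H μH ∘ₗ (TensorProduct.assoc F H H H).toLinearMap =
      μH ∘ₗ LinearMap.rTensor H μH)
    (hcoassoc : LinearMap.lTensor H ΔH ∘ₗ ΔH =
      (TensorProduct.assoc F H H H).toLinearMap ∘ₗ LinearMap.rTensor H ΔH ∘ₗ ΔH)
    (hbi : ΔH ∘ₗ μH = TensorProduct.map μH μH ∘ₗ
      (TensorProduct.tensorTensorTensorComm F H H H H).toLinearMap ∘ₗ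
      TensorProduct.map ΔH ΔH)
    -- α_H is a bialgebra endomorphism
    (hαμ : αH ∘ₗ μH = μH ∘ₗ TensorProduct.map αH αH)
    (hαΔ : ΔH ∘ₗ αH = TensorProduct.map αH αH ∘ₗ ΔH) :
    -- (H, μ_α = α_H ∘ μ_H, α_H) is a Hom-associative algebra
    (αH ∘ₗ (αH ∘ₗ μH) = (αH ∘ₗ μH) ∘ₗ TensorProduct.map αH αH ∧
     (αH ∘ₗ μH) ∘ₗ TensorProduct.map αH (αH ∘ₗ μH) ∘ₗ
        (TensorProduct.assoc F H H H).toLinearMap =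
      (αH ∘ₗ μH) ∘ₗ TensorProduct.map (αH ∘ₗ μH) αH) ∧
    -- (H, Δ_α = Δ_H ∘ α_H, α_H) is a Hom-coassociative coalgebra
    ((ΔH ∘ₗ αH) ∘ₗ αH = TensorProduct.map αH αH ∘ₗ (ΔH ∘ₗ αH) ∧
     TensorProduct.map αH (ΔH ∘ₗ αH) ∘ₗ (ΔH ∘ₗ αH) =
      (TensorProduct.assoc F H H H).toLinearMap ∘ₗ
        TensorProduct.map (ΔH ∘ₗ αH) αH ∘ₗ (ΔH ∘ₗ αH)) ∧
    -- Δ_α is multiplicative with respect to μ_α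
    ((ΔH ∘ₗ αH) ∘ₗ (αH ∘ₗ μH) =
      TensorProduct.map (αH ∘ₗ μH) (αH ∘ₗ μH) ∘ₗ
        (TensorProduct.tensorTensorTensorComm F H H H H).toLinearMap ∘ₗ
        TensorProduct.map (ΔH ∘ₗ αH) (ΔH ∘ₗ αH)) :=
  ⟨HomBialgebra.isHomAssociative_comp hassoc hαμ,
    HomBialgebra.isHomCoassociative_comp hcoassoc hαΔ,
    HomBialgebra.IsMultiplicative.comp hbi hαμ hαΔ⟩
end

section
/- Let (C, Δ_C) be a coassociative coalgebra, (M) a C-comodule via δ : M → C ⊗ M, α_C : C → C a coalgebra endomorphism and α_M : M → M a linear map with δ ∘ α_M = (α_C ⊗ α_M) ∘ δ. Then δ_α = (α_C ⊗ α_M) ∘ δ is a comodule structure map for the Hom-coassociative coalgebra C_α = (C, Δ_C ∘ α_C, α_C) on the Hom-module (M, α_M): δ_α ∘ α_M = (α_C ⊗ α_M) ∘ δ_α and (α_C ⊗ δ_α) ∘ δ_α = ((Δ_C ∘ α_C) ⊗ α_M) ∘ δ_α. -/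
open TensorProduct

/-!
Write `δ_α = (α_C ⊗ α_M) ∘ δ`. Multiplicativity of `δ_α` is the compatibility of `δ` with
`α_M`. For Hom-coassociativity, push `α_C ⊗ δ_α` past `α_C ⊗ α_M` using that compatibility,
which turns `(α_C ⊗ δ_α) ∘ δ_α` into `(α_C² ⊗ α_C² ⊗ α_M²) ∘ (id ⊗ δ) ∘ δ`; the classical
coassociativity of `δ` and the fact that `α_C²` is again a coalgebra endomorphism rewrite this
as `((Δ_C ∘ α_C) ⊗ α_M) ∘ δ_α`.
-/

namespace LinearMap

variable {R C : Type*} [CommSemiring R] [AddCommMonoid C] [Module R C]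

theorem comp_comp_eq_map_comp_comp {Δ : C →ₗ[R] C ⊗[R] C} {a b : C →ₗ[R] C}
    (ha : Δ ∘ₗ a = map a a ∘ₗ Δ) (hb : Δ ∘ₗ b = map b b ∘ₗ Δ) :
    Δ ∘ₗ a ∘ₗ b = map (a ∘ₗ b) (a ∘ₗ b) ∘ₗ Δ := by
  rw [map_comp, ← comp_assoc, ha, comp_assoc, hb, comp_assoc]

end LinearMap

open LinearMap

theorem stmt_8_general {F : Type*} [Field F] {C M : Type*}
    [AddCommGroup C] [Module F C] [AddCommGroup M] [Module F M]
    (ΔC : C →ₗ[F] C ⊗[F] C) (δ : M →ₗ[F] C ⊗[F] M)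
    (αC : C →ₗ[F] C) (αM : M →ₗ[F] M)
    -- δ is a (classical) C-comodule structure on M
    (hδ : LinearMap.lTensor C δ ∘ₗ δ =
      (TensorProduct.assoc F C C M).toLinearMap ∘ₗ LinearMap.rTensor M ΔC ∘ₗ δ)
    -- α_C is a coalgebra endomorphism
    (hαC : ΔC ∘ₗ αC = TensorProduct.map αC αC ∘ₗ ΔC)
    -- compatibility δ ∘ α_M = (α_C ⊗ α_M) ∘ δ
    (hcomp : δ ∘ₗ αM = TensorProduct.map αC αM ∘ₗ δ) :
    -- δ_α = (α_C ⊗ α_M) ∘ δ is a comodule structure for C_α on (M, α_M)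
    (TensorProduct.map αC αM ∘ₗ δ) ∘ₗ αM =
      TensorProduct.map αC αM ∘ₗ (TensorProduct.map αC αM ∘ₗ δ) ∧
    TensorProduct.map αC (TensorProduct.map αC αM ∘ₗ δ) ∘ₗ
        (TensorProduct.map αC αM ∘ₗ δ) =
      (TensorProduct.assoc F C C M).toLinearMap ∘ₗ
        TensorProduct.map (ΔC ∘ₗ αC) αM ∘ₗ (TensorProduct.map αC αM ∘ₗ δ) := by
  have hmul : (map αC αM ∘ₗ δ) ∘ₗ αM = map αC αM ∘ₗ map αC αM ∘ₗ δ := by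
    rw [comp_assoc, hcomp]
  refine ⟨hmul, ?_⟩
  calc map αC (map αC αM ∘ₗ δ) ∘ₗ map αC αM ∘ₗ δ
      = map (αC ∘ₗ αC) ((map αC αM ∘ₗ δ) ∘ₗ αM) ∘ₗ δ := by rw [← comp_assoc, ← map_comp]
    _ = map (αC ∘ₗ αC) (map αC αM ∘ₗ map αC αM) ∘ₗ lTensor C δ ∘ₗ δ := by
      rw [hmul, ← comp_assoc δ (lTensor C δ), map_comp_lTensor, comp_assoc δ]
    _ = map (αC ∘ₗ αC) (map (αC ∘ₗ αC) (αM ∘ₗ αM)) ∘ₗ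
          (TensorProduct.assoc F C C M).toLinearMap ∘ₗ rTensor M ΔC ∘ₗ δ := by
      rw [hδ, ← map_comp αC αM αC αM]
    _ = (TensorProduct.assoc F C C M).toLinearMap ∘ₗ
          map (map (αC ∘ₗ αC) (αC ∘ₗ αC) ∘ₗ ΔC) (αM ∘ₗ αM) ∘ₗ δ := by
      rw [← comp_assoc, map_map_comp_assoc_eq, comp_assoc, ← comp_assoc _ (rTensor M ΔC),
        map_comp_rTensor]
    _ = (TensorProduct.assoc F C C M).toLinearMap ∘ₗ
          map (ΔC ∘ₗ αC) αM ∘ₗ map αC αM ∘ₗ δ := by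
      rw [← comp_comp_eq_map_comp_comp hαC hαC, ← comp_assoc δ (map αC αM), ← map_comp,
        comp_assoc]

/-- Deforming a comodule over a coassociative coalgebra along compatible
endomorphisms yields a comodule over the deformed Hom-coassociative coalgebra. -/
theorem stmt_8 {F : Type*} [Field F] {C M : Type*}
    [AddCommGroup C] [Module F C] [AddCommGroup M] [Module F M]
    (ΔC : C →ₗ[F] C ⊗[F] C) (δ : M →ₗ[F] C ⊗[F] M)
    (αC : C →ₗ[F] C) (αM : M →ₗ[F] M)
    -- C is a coassociative coalgebra
    (hcoassoc : LinearMap.lTensor C ΔC ∘ₗ ΔC =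
      (TensorProduct.assoc F C C C).toLinearMap ∘ₗ LinearMap.rTensor C ΔC ∘ₗ ΔC)
    -- δ is a (classical) C-comodule structure on M
    (hδ : LinearMap.lTensor C δ ∘ₗ δ =
      (TensorProduct.assoc F C C M).toLinearMap ∘ₗ LinearMap.rTensor M ΔC ∘ₗ δ)
    -- α_C is a coalgebra endomorphism
    (hαC : ΔC ∘ₗ αC = TensorProduct.map αC αC ∘ₗ ΔC)
    -- compatibility δ ∘ α_M = (α_C ⊗ α_M) ∘ δ
    (hcomp : δ ∘ₗ αM = TensorProduct.map αC αM ∘ₗ δ) :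
    -- δ_α = (α_C ⊗ α_M) ∘ δ is a comodule structure for C_α on (M, α_M)
    (TensorProduct.map αC αM ∘ₗ δ) ∘ₗ αM =
      TensorProduct.map αC αM ∘ₗ (TensorProduct.map αC αM ∘ₗ δ) ∧
    TensorProduct.map αC (TensorProduct.map αC αM ∘ₗ δ) ∘ₗ
        (TensorProduct.map αC αM ∘ₗ δ) =
      (TensorProduct.assoc F C C M).toLinearMap ∘ₗ
        TensorProduct.map (ΔC ∘ₗ αC) αM ∘ₗ (TensorProduct.map αC αM ∘ₗ δ) :=
  stmt_8_general ΔC δ αC αM hδ hαC hcomp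
end

section
/- Let (C, Δ_C, α_C) and (D, Δ_D, α_D) be Hom-coassociative coalgebras. Then C ⊗ D with comultiplication Δ_{C⊗D} = (id_C ⊗ τ_{D,C} ⊗ id_D) ∘ (Δ_C ⊗ Δ_D) and structure map α_C ⊗ α_D is a Hom-coassociative coalgebra. -/
/-!
Write `T` for the middle-four interchange `(a ⊗ b) ⊗ (c ⊗ d) ↦ (a ⊗ c) ⊗ (b ⊗ d)`, so that
`Δ_{C⊗D} = T ∘ (Δ_C ⊗ Δ_D)`. Compatibility of `α_C ⊗ α_D` with `Δ_{C⊗D}` is naturality of `T`. For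
Hom-coassociativity, naturality of `T` moves both `(α ⊗ Δ) ∘ Δ` and `(Δ ⊗ α) ∘ Δ` on `C ⊗ D`
past the interchanges, turning them into the corresponding maps on `C` and on `D` followed by one
and the same rearrangement `(C ⊗ C ⊗ C) ⊗ (D ⊗ D ⊗ D) → (C ⊗ D) ⊗ (C ⊗ D) ⊗ (C ⊗ D)`; the two
sides then agree by Hom-coassociativity of `C` and of `D`.
-/

open TensorProduct

namespace TensorProduct

variable {R : Type*} [CommSemiring R] {C D : Type*}
  [AddCommMonoid C] [Module R C] [AddCommMonoid D] [Module R D]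

noncomputable def tensorComul (ΔC : C →ₗ[R] C ⊗[R] C) (ΔD : D →ₗ[R] D ⊗[R] D) :
    C ⊗[R] D →ₗ[R] (C ⊗[R] D) ⊗[R] (C ⊗[R] D) :=
  (tensorTensorTensorComm R C C D D).toLinearMap ∘ₗ map ΔC ΔD

variable (R C D) in
noncomputable def tripleTensorComm :
    (C ⊗[R] (C ⊗[R] C)) ⊗[R] (D ⊗[R] (D ⊗[R] D)) →ₗ[R]
      (C ⊗[R] D) ⊗[R] ((C ⊗[R] D) ⊗[R] (C ⊗[R] D)) :=
  map LinearMap.id (tensorTensorTensorComm R C C D D).toLinearMap ∘ₗ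
    (tensorTensorTensorComm R C (C ⊗[R] C) D (D ⊗[R] D)).toLinearMap

theorem assoc_comp_map_tensorTensorTensorComm :
    ((TensorProduct.assoc R (C ⊗[R] D) (C ⊗[R] D) (C ⊗[R] D)).toLinearMap ∘ₗ
        map (tensorTensorTensorComm R C C D D).toLinearMap LinearMap.id) ∘ₗ
        (tensorTensorTensorComm R (C ⊗[R] C) C (D ⊗[R] D) D).toLinearMap =
      tripleTensorComm R C D ∘ₗ
        map (TensorProduct.assoc R C C C).toLinearMap (TensorProduct.assoc R D D D).toLinearMap := by
  ext
  rfl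

theorem tensorComul_comp_map {ΔC : C →ₗ[R] C ⊗[R] C} {ΔD : D →ₗ[R] D ⊗[R] D}
    {αC : C →ₗ[R] C} {αD : D →ₗ[R] D}
    (hC : ΔC ∘ₗ αC = map αC αC ∘ₗ ΔC) (hD : ΔD ∘ₗ αD = map αD αD ∘ₗ ΔD) :
    tensorComul ΔC ΔD ∘ₗ map αC αD = map (map αC αD) (map αC αD) ∘ₗ tensorComul ΔC ΔD := by
  rw [tensorComul, LinearMap.comp_assoc, ← map_comp, hC, hD, map_comp,
    ← LinearMap.comp_assoc, tensorTensorTensorComm_comp_map, LinearMap.comp_assoc]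

theorem map_tensorComul_comp_tensorComul (ΔC : C →ₗ[R] C ⊗[R] C) (ΔD : D →ₗ[R] D ⊗[R] D)
    (f : C →ₗ[R] C) (g : D →ₗ[R] D) :
    map (map f g) (tensorComul ΔC ΔD) ∘ₗ tensorComul ΔC ΔD =
      tripleTensorComm R C D ∘ₗ map (map f ΔC ∘ₗ ΔC) (map g ΔD ∘ₗ ΔD) := by
  rw [tensorComul, ← LinearMap.id_comp (map f g), map_comp, LinearMap.comp_assoc,
    ← LinearMap.comp_assoc (map ΔC ΔD), ← tensorTensorTensorComm_comp_map, tripleTensorComm]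
  simp only [LinearMap.comp_assoc, ← map_comp]

theorem assoc_comp_map_tensorComul_comp_tensorComul (ΔC : C →ₗ[R] C ⊗[R] C)
    (ΔD : D →ₗ[R] D ⊗[R] D) (f : C →ₗ[R] C) (g : D →ₗ[R] D) :
    (TensorProduct.assoc R (C ⊗[R] D) (C ⊗[R] D) (C ⊗[R] D)).toLinearMap ∘ₗ
        map (tensorComul ΔC ΔD) (map f g) ∘ₗ tensorComul ΔC ΔD =
      tripleTensorComm R C D ∘ₗ
        map ((TensorProduct.assoc R C C C).toLinearMap ∘ₗ map ΔC f ∘ₗ ΔC)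
          ((TensorProduct.assoc R D D D).toLinearMap ∘ₗ map ΔD g ∘ₗ ΔD) := by
  rw [tensorComul, ← LinearMap.id_comp (map f g), map_comp, LinearMap.comp_assoc,
    ← LinearMap.comp_assoc (map ΔC ΔD), ← tensorTensorTensorComm_comp_map]
  simp only [← LinearMap.comp_assoc]
  rw [assoc_comp_map_tensorTensorTensorComm]
  simp only [LinearMap.comp_assoc, ← map_comp]

end TensorProduct

/-- The tensor product of two Hom-coassociative coalgebras is a
Hom-coassociative coalgebra. -/
theorem stmt_9 {F : Type*} [Field F] {C D : Type*}
    [AddCommGroup C] [Module F C] [AddCommGroup D] [Module F D]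
    (ΔC : C →ₗ[F] C ⊗[F] C) (αC : C →ₗ[F] C)
    (ΔD : D →ₗ[F] D ⊗[F] D) (αD : D →ₗ[F] D)
    (hCcm : ΔC ∘ₗ αC = TensorProduct.map αC αC ∘ₗ ΔC)
    (hCca : TensorProduct.map αC ΔC ∘ₗ ΔC =
      (TensorProduct.assoc F C C C).toLinearMap ∘ₗ TensorProduct.map ΔC αC ∘ₗ ΔC)
    (hDcm : ΔD ∘ₗ αD = TensorProduct.map αD αD ∘ₗ ΔD)
    (hDca : TensorProduct.map αD ΔD ∘ₗ ΔD =
      (TensorProduct.assoc F D D D).toLinearMap ∘ₗ TensorProduct.map ΔD αD ∘ₗ ΔD) :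
    -- comultiplicativity of Δ_{C⊗D} = (id ⊗ τ ⊗ id) ∘ (Δ_C ⊗ Δ_D)
    ((TensorProduct.tensorTensorTensorComm F C C D D).toLinearMap ∘ₗ
        TensorProduct.map ΔC ΔD) ∘ₗ TensorProduct.map αC αD =
      TensorProduct.map (TensorProduct.map αC αD) (TensorProduct.map αC αD) ∘ₗ
        ((TensorProduct.tensorTensorTensorComm F C C D D).toLinearMap ∘ₗ
          TensorProduct.map ΔC ΔD) ∧
    -- Hom-coassociativity of Δ_{C⊗D}
    TensorProduct.map (TensorProduct.map αC αD)
        ((TensorProduct.tensorTensorTensorComm F C C D D).toLinearMap ∘ₗ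
          TensorProduct.map ΔC ΔD) ∘ₗ
        ((TensorProduct.tensorTensorTensorComm F C C D D).toLinearMap ∘ₗ
          TensorProduct.map ΔC ΔD) =
      (TensorProduct.assoc F (C ⊗[F] D) (C ⊗[F] D) (C ⊗[F] D)).toLinearMap ∘ₗ
        TensorProduct.map
          ((TensorProduct.tensorTensorTensorComm F C C D D).toLinearMap ∘ₗ
            TensorProduct.map ΔC ΔD) (TensorProduct.map αC αD) ∘ₗ
        ((TensorProduct.tensorTensorTensorComm F C C D D).toLinearMap ∘ₗ
          TensorProduct.map ΔC ΔD) := by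
  refine ⟨tensorComul_comp_map hCcm hDcm, ?_⟩
  have h := assoc_comp_map_tensorComul_comp_tensorComul ΔC ΔD αC αD
  rw [← hCca, ← hDca, ← map_tensorComul_comp_tensorComul] at h
  exact h.symm
end

section
/- Let (C, Δ_C, α_C) be a Hom-coassociative coalgebra and (M, α_M) a C-comodule with structure map δ. Then for every k ≥ 0, the map δ^{(k)} = (α_C^{2k} ⊗ id_M) ∘ δ is again the structure map of a C-comodule on (M, α_M). -/
/-!
Since `α_C^{2k}` commutes with `α_C` and is a coalgebra endomorphism of `(C, Δ_C)` (by
multiplicativity of `Δ_C`), it suffices to check that twisting a coaction by any endomorphism `β`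
of `C` with these two properties gives again a coaction: both axioms for `(β ⊗ id) ∘ δ` follow
from those of `δ` by pushing `β` through `α_C ⊗ α_M` and through `Δ_C ⊗ α_M`.
-/

open TensorProduct

section Twist

variable {R C M : Type*} [CommSemiring R] [AddCommMonoid C] [Module R C]
  [AddCommMonoid M] [Module R M] {ΔC : C →ₗ[R] C ⊗[R] C} {αC β : C →ₗ[R] C}
  {αM : M →ₗ[R] M} {δ : M →ₗ[R] C ⊗[R] M}

theorem map_id_comp_coaction_comp_comm (hβα : β ∘ₗ αC = αC ∘ₗ β)
    (hδm : δ ∘ₗ αM = map αC αM ∘ₗ δ) :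
    (map β LinearMap.id ∘ₗ δ) ∘ₗ αM = map αC αM ∘ₗ (map β LinearMap.id ∘ₗ δ) := by
  rw [LinearMap.comp_assoc, hδm, ← LinearMap.comp_assoc, ← LinearMap.comp_assoc,
    ← map_comp, ← map_comp, hβα, LinearMap.id_comp, LinearMap.comp_id]

theorem map_id_comp_coaction_coassoc (hβα : β ∘ₗ αC = αC ∘ₗ β)
    (hβ : ΔC ∘ₗ β = map β β ∘ₗ ΔC)
    (hδ : map αC δ ∘ₗ δ = (TensorProduct.assoc R C C M).toLinearMap ∘ₗ map ΔC αM ∘ₗ δ) :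
    map αC (map β LinearMap.id ∘ₗ δ) ∘ₗ (map β LinearMap.id ∘ₗ δ) =
      (TensorProduct.assoc R C C M).toLinearMap ∘ₗ map ΔC αM ∘ₗ
        (map β LinearMap.id ∘ₗ δ) := by
  calc map αC (map β LinearMap.id ∘ₗ δ) ∘ₗ (map β LinearMap.id ∘ₗ δ)
      = map β (map β LinearMap.id) ∘ₗ map αC δ ∘ₗ δ := by
        rw [← LinearMap.comp_assoc, ← map_comp, ← LinearMap.comp_assoc, ← map_comp, hβα,
          LinearMap.comp_id]
    _ = (TensorProduct.assoc R C C M).toLinearMap ∘ₗ map (map β β ∘ₗ ΔC) αM ∘ₗ δ := by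
        rw [hδ, ← LinearMap.comp_assoc, map_map_comp_assoc_eq, LinearMap.comp_assoc,
          ← LinearMap.comp_assoc δ, ← map_comp, LinearMap.id_comp]
    _ = (TensorProduct.assoc R C C M).toLinearMap ∘ₗ map ΔC αM ∘ₗ
          (map β LinearMap.id ∘ₗ δ) := by
        rw [← hβ, ← LinearMap.comp_assoc δ (map β LinearMap.id), ← map_comp, LinearMap.comp_id]

end Twist

theorem comp_pow_eq_map_pow_comp {R C D : Type*} [CommSemiring R] [AddCommMonoid C]
    [Module R C] [AddCommMonoid D] [Module R D] {Δ : C →ₗ[R] C ⊗[R] D}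
    {α : Module.End R C} {γ : Module.End R D} (h : Δ ∘ₗ α = map α γ ∘ₗ Δ) (n : ℕ) :
    Δ ∘ₗ (α ^ n : Module.End R C) = map (α ^ n) (γ ^ n) ∘ₗ Δ := by
  rw [← TensorProduct.map_pow, Module.End.commute_pow_left_of_commute h.symm]

theorem stmt_13_general {F : Type*} [Field F] {C M : Type*}
    [AddCommGroup C] [Module F C] [AddCommGroup M] [Module F M]
    (ΔC : C →ₗ[F] C ⊗[F] C) (αC : C →ₗ[F] C) (αM : M →ₗ[F] M)
    (δ : M →ₗ[F] C ⊗[F] M)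
    -- (C, Δ_C, α_C) is a Hom-coassociative coalgebra
    (hcm : ΔC ∘ₗ αC = TensorProduct.map αC αC ∘ₗ ΔC)
    -- δ is a C-comodule structure on (M, α_M)
    (hδm : δ ∘ₗ αM = TensorProduct.map αC αM ∘ₗ δ)
    (hδ : TensorProduct.map αC δ ∘ₗ δ =
      (TensorProduct.assoc F C C M).toLinearMap ∘ₗ TensorProduct.map ΔC αM ∘ₗ δ) :
    ∀ k : ℕ,
      (TensorProduct.map ((αC ^ (2 * k) : Module.End F C)) LinearMap.id ∘ₗ δ) ∘ₗ αM =
        TensorProduct.map αC αM ∘ₗ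
          (TensorProduct.map ((αC ^ (2 * k) : Module.End F C)) LinearMap.id ∘ₗ δ) ∧
      TensorProduct.map αC
          (TensorProduct.map ((αC ^ (2 * k) : Module.End F C)) LinearMap.id ∘ₗ δ) ∘ₗ
          (TensorProduct.map ((αC ^ (2 * k) : Module.End F C)) LinearMap.id ∘ₗ δ) =
        (TensorProduct.assoc F C C M).toLinearMap ∘ₗ TensorProduct.map ΔC αM ∘ₗ
          (TensorProduct.map ((αC ^ (2 * k) : Module.End F C)) LinearMap.id ∘ₗ δ) := by
  intro k
  have hcomm : (αC ^ (2 * k) : Module.End F C) ∘ₗ αC = αC ∘ₗ (αC ^ (2 * k) : Module.End F C) :=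
    (Commute.self_pow αC (2 * k)).eq.symm
  exact ⟨map_id_comp_coaction_comp_comm hcomm hδm,
    map_id_comp_coaction_coassoc hcomm (comp_pow_eq_map_pow_comp hcm (2 * k)) hδ⟩

/-- Iterated twisting: for every k ≥ 0, (α_C^{2k} ⊗ id_M) ∘ δ is again a
C-comodule structure map on (M, α_M). -/
theorem stmt_13 {F : Type*} [Field F] {C M : Type*}
    [AddCommGroup C] [Module F C] [AddCommGroup M] [Module F M]
    (ΔC : C →ₗ[F] C ⊗[F] C) (αC : C →ₗ[F] C) (αM : M →ₗ[F] M)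
    (δ : M →ₗ[F] C ⊗[F] M)
    -- (C, Δ_C, α_C) is a Hom-coassociative coalgebra
    (hcm : ΔC ∘ₗ αC = TensorProduct.map αC αC ∘ₗ ΔC)
    (hca : TensorProduct.map αC ΔC ∘ₗ ΔC =
      (TensorProduct.assoc F C C C).toLinearMap ∘ₗ TensorProduct.map ΔC αC ∘ₗ ΔC)
    -- δ is a C-comodule structure on (M, α_M)
    (hδm : δ ∘ₗ αM = TensorProduct.map αC αM ∘ₗ δ)
    (hδ : TensorProduct.map αC δ ∘ₗ δ =
      (TensorProduct.assoc F C C M).toLinearMap ∘ₗ TensorProduct.map ΔC αM ∘ₗ δ) :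
    ∀ k : ℕ,
      (TensorProduct.map ((αC ^ (2 * k) : Module.End F C)) LinearMap.id ∘ₗ δ) ∘ₗ αM =
        TensorProduct.map αC αM ∘ₗ
          (TensorProduct.map ((αC ^ (2 * k) : Module.End F C)) LinearMap.id ∘ₗ δ) ∧
      TensorProduct.map αC
          (TensorProduct.map ((αC ^ (2 * k) : Module.End F C)) LinearMap.id ∘ₗ δ) ∘ₗ
          (TensorProduct.map ((αC ^ (2 * k) : Module.End F C)) LinearMap.id ∘ₗ δ) =
        (TensorProduct.assoc F C C M).toLinearMap ∘ₗ TensorProduct.map ΔC αM ∘ₗ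
          (TensorProduct.map ((αC ^ (2 * k) : Module.End F C)) LinearMap.id ∘ₗ δ) :=
  stmt_13_general ΔC αC αM δ hcm hδm hδ
end
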